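/- arXiv:1907.01948 — 2 statements merged into one kernel-verified Lean document; each statement's English description precedes it below -/
import Mathlib

section
/- Let ν ≥ 0, α ≥ 1, and r > 0. The function F(η) = η^α · I_ν'(η⁻¹ r) / I_ν(η⁻¹ r) is strictly monotonically increasing in η on (0, ∞). -/
/-- Modified Bessel function of the first kind of order ν. -/
noncomputable def besselI (ν : ℝ) (x : ℝ) : ℝ :=
  ∑' k : ℕ, (x / 2) ^ (ν + 2 * (k : ℝ)) / ((Nat.factorial k : ℝ) * Real.Gamma (ν + (k : ℝ) + 1))

/-!
For `x > 0`, `I_μ(x) = (x/2)^μ S_μ((x/2)^2)` where `S_μ(y) = ∑ y^k / (k! Γ(μ+k+1))` is entire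
with `S_μ' = S_{μ+1}`, so
`h(x) := x^{-α} I_ν'(x)/I_ν(x) = ν x^{-α-1} + x^{1-α} S_{ν+1}(x²/4) / (2 S_ν(x²/4))`.
The coefficients of `S_{ν+1}` are those of `S_ν` weighted by the strictly decreasing `1/(ν+k+1)`;
Chebyshev's sum inequality, applied to the Cauchy product symmetrised in `(k, j)`, makes
`S_{ν+1}/S_ν` strictly decreasing on `[0, ∞)`. Hence for `ν ≥ 0`, `α ≥ 1` the function `h` is
strictly decreasing on `(0, ∞)`, and `F(η) = r^α h(r/η)` is strictly increasing.
-/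

open Real Set
open scoped Nat

theorem hasDerivAt_tsum_mul_pow {a : ℕ → ℝ} (ha : ∀ R, Summable fun k => a k * R ^ k) (y : ℝ) :
    HasDerivAt (fun z => ∑' k, a k * z ^ k) (∑' k, (k + 1) * a (k + 1) * y ^ k) y := by
  set R := |y| + 1
  have hR : 1 ≤ R := by simp [R]
  have hbound : ∀ k : ℕ, |a k| * (k * R ^ (k - 1)) ≤ |a k * (2 * R) ^ k| := by
    intro k
    rw [abs_mul, abs_of_nonneg (by positivity : (0 : ℝ) ≤ (2 * R) ^ k), mul_pow]
    gcongr
    · exact_mod_cast Nat.lt_two_pow_self.le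
    · exact Nat.sub_le k 1
  have hu : Summable fun k : ℕ => |a k| * (k * R ^ (k - 1)) :=
    .of_nonneg_of_le (fun k => by positivity) hbound (ha (2 * R)).abs
  have hyR : y ∈ Ioo (-R) R := abs_lt.mp (by simp [R])
  have hderiv := hasDerivAt_tsum_of_isPreconnected hu isOpen_Ioo isPreconnected_Ioo
    (g' := fun k z => a k * (k * z ^ (k - 1)))
    (fun k z _ => (hasDerivAt_pow k z).const_mul (a k))
    (fun k z hz => by
      rw [norm_mul, norm_mul, norm_pow, Real.norm_natCast, Real.norm_eq_abs, Real.norm_eq_abs]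
      gcongr
      exact (abs_lt.mpr hz).le)
    hyR (ha y) hyR
  have hsum : Summable fun k : ℕ => a k * (k * y ^ (k - 1)) :=
    .of_norm_bounded hu fun k => by
      rw [norm_mul, norm_mul, norm_pow, Real.norm_natCast, Real.norm_eq_abs, Real.norm_eq_abs]
      gcongr
      exact (abs_lt.mpr hyR).le
  refine hderiv.congr_deriv ?_
  rw [hsum.tsum_eq_zero_add]
  simp only [CharP.cast_eq_zero, zero_mul, mul_zero, zero_add, Nat.cast_add, Nat.cast_one,
    Nat.add_sub_cancel]
  exact tsum_congr fun k => by ring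

theorem pow_mul_pow_sub_pow_mul_pow_nonneg {u v : ℝ} (hu : 0 ≤ u) (huv : u ≤ v) {k j : ℕ}
    (hkj : k ≤ j) : 0 ≤ u ^ k * v ^ j - v ^ k * u ^ j := by
  obtain ⟨m, rfl⟩ := Nat.exists_eq_add_of_le hkj
  have : u ^ m ≤ v ^ m := pow_le_pow_left₀ hu huv m
  have hv : 0 ≤ v := hu.trans huv
  have : u ^ k * v ^ (k + m) - v ^ k * u ^ (k + m) = u ^ k * v ^ k * (v ^ m - u ^ m) := by ring
  rw [this]
  exact mul_nonneg (by positivity) (sub_nonneg.mpr ‹_›)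

theorem Antitone.sub_mul_pow_mul_pow_sub_nonneg {c : ℕ → ℝ} (hc : Antitone c) {u v : ℝ}
    (hu : 0 ≤ u) (huv : u ≤ v) (k j : ℕ) :
    0 ≤ (c k - c j) * (u ^ k * v ^ j - v ^ k * u ^ j) := by
  rcases le_total k j with hkj | hjk
  · exact mul_nonneg (sub_nonneg.mpr (hc hkj)) (pow_mul_pow_sub_pow_mul_pow_nonneg hu huv hkj)
  · refine mul_nonneg_of_nonpos_of_nonpos (sub_nonpos.mpr (hc hjk)) ?_
    linarith [pow_mul_pow_sub_pow_mul_pow_nonneg hu huv hjk]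

theorem tsum_add_comp_swap {β : Type*} {f : β × β → ℝ} (hf : Summable f) :
    ∑' z, (f z + f z.swap) = 2 * ∑' z, f z := by
  have hswap : Summable fun z : β × β => f z.swap := hf.comp_injective Prod.swap_injective
  rw [hf.tsum_add hswap, two_mul]
  congr 1
  exact (Equiv.prodComm β β).tsum_eq f

theorem tsum_mul_pow_mul_tsum_lt {a c : ℕ → ℝ} (ha : ∀ k, 0 < a k) (hc : StrictAnti c)
    {u v : ℝ} (hu : 0 ≤ u) (huv : u < v)
    (hau : Summable fun k => a k * u ^ k) (hav : Summable fun k => a k * v ^ k)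
    (hacu : Summable fun k => a k * c k * u ^ k) (hacv : Summable fun k => a k * c k * v ^ k) :
    (∑' k, a k * c k * v ^ k) * ∑' k, a k * u ^ k <
      (∑' k, a k * c k * u ^ k) * ∑' k, a k * v ^ k := by
  have hP := summable_mul_of_summable_norm hacv.norm hau.norm
  have hQ := summable_mul_of_summable_norm hacu.norm hav.norm
  rw [tsum_mul_tsum_of_summable_norm hacv.norm hau.norm,
    tsum_mul_tsum_of_summable_norm hacu.norm hav.norm]
  refine lt_of_mul_lt_mul_left ?_ zero_le_two
  rw [← tsum_add_comp_swap hP, ← tsum_add_comp_swap hQ]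
  have hdiff : ∀ k j : ℕ, (a k * c k * u ^ k * (a j * v ^ j) + a j * c j * u ^ j * (a k * v ^ k)) -
      (a k * c k * v ^ k * (a j * u ^ j) + a j * c j * v ^ j * (a k * u ^ k)) =
      a k * a j * ((c k - c j) * (u ^ k * v ^ j - v ^ k * u ^ j)) := fun k j => by ring
  refine Summable.tsum_lt_tsum (i := (0, 1)) (fun ⟨k, j⟩ => ?_) ?_
    (hP.add (hP.comp_injective Prod.swap_injective))
    (hQ.add (hQ.comp_injective Prod.swap_injective))
  · have := hdiff k j
    have := hc.antitone.sub_mul_pow_mul_pow_sub_nonneg hu huv.le k j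
    have := mul_pos (ha k) (ha j)
    simp only [Prod.swap]
    nlinarith
  · have := hdiff 0 1
    have := mul_pos (mul_pos (ha 0) (ha 1))
      (mul_pos (sub_pos.mpr (hc zero_lt_one)) (sub_pos.mpr huv))
    simp only [Prod.swap, pow_zero, pow_one, one_mul, mul_one] at *
    linarith

theorem strictAntiOn_tsum_mul_pow_div_tsum_mul_pow {a c : ℕ → ℝ} (ha : ∀ k, 0 < a k)
    (hc : StrictAnti c) (hA : ∀ y, 0 ≤ y → Summable fun k => a k * y ^ k)
    (hAc : ∀ y, 0 ≤ y → Summable fun k => a k * c k * y ^ k) :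
    StrictAntiOn (fun y => (∑' k, a k * c k * y ^ k) / ∑' k, a k * y ^ k) (Ici 0) := by
  have hpos : ∀ y : ℝ, 0 ≤ y → 0 < ∑' k, a k * y ^ k := fun y hy =>
    (hA y hy).tsum_pos (fun k => mul_nonneg (ha k).le (pow_nonneg hy k)) 0 (by simpa using ha 0)
  intro u hu v hv huv
  rw [div_lt_div_iff₀ (hpos v hv) (hpos u hu)]
  exact tsum_mul_pow_mul_tsum_lt ha hc hu huv (hA u hu) (hA v hv) (hAc u hu) (hAc v hv)

noncomputable def besselCoeff (μ : ℝ) (k : ℕ) : ℝ := 1 / (k ! * Gamma (μ + k + 1))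

noncomputable def besselSeries (μ y : ℝ) : ℝ := ∑' k, besselCoeff μ k * y ^ k

section
variable {μ : ℝ}

theorem add_natCast_add_one_pos (hμ : -1 < μ) (k : ℕ) : 0 < μ + k + 1 := by
  linarith [(Nat.cast_nonneg k : (0 : ℝ) ≤ k)]

theorem besselCoeff_pos (hμ : -1 < μ) (k : ℕ) : 0 < besselCoeff μ k := by
  have : 0 < Gamma (μ + k + 1) := Gamma_pos_of_pos (add_natCast_add_one_pos hμ k)
  unfold besselCoeff
  positivity

theorem besselCoeff_succ (hμ : -1 < μ) (k : ℕ) :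
    besselCoeff μ (k + 1) = besselCoeff μ k / ((k + 1) * (μ + k + 1)) := by
  have hk := (add_natCast_add_one_pos hμ k).ne'
  have : μ + (k + 1 : ℕ) + 1 = (μ + k + 1) + 1 := by push_cast; ring
  rw [besselCoeff, besselCoeff, this, Gamma_add_one hk, Nat.factorial_succ]
  push_cast
  field_simp

theorem besselCoeff_add_one (hμ : -1 < μ) (k : ℕ) :
    besselCoeff (μ + 1) k = besselCoeff μ k * (μ + k + 1)⁻¹ := by
  have hk := (add_natCast_add_one_pos hμ k).ne'
  rw [besselCoeff, besselCoeff, add_right_comm μ 1, Gamma_add_one hk]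
  field_simp

theorem succ_mul_besselCoeff_succ (hμ : -1 < μ) (k : ℕ) :
    (k + 1) * besselCoeff μ (k + 1) = besselCoeff (μ + 1) k := by
  have hk := (add_natCast_add_one_pos hμ k).ne'
  rw [besselCoeff_succ hμ, besselCoeff_add_one hμ]
  field_simp

theorem besselCoeff_le (hμ : -1 < μ) (k : ℕ) :
    besselCoeff μ k ≤ besselCoeff μ 0 * (μ + 1)⁻¹ ^ k / k ! := by
  have hμ1 : 0 < μ + 1 := by linarith
  induction k with
  | zero => simp
  | succ k ih =>
    have hk := add_natCast_add_one_pos hμ k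
    have h1 : 1 ≤ (μ + 1)⁻¹ * (μ + k + 1) := by
      rw [inv_mul_eq_div, one_le_div hμ1]
      linarith [(Nat.cast_nonneg k : (0 : ℝ) ≤ k)]
    have := besselCoeff_pos hμ 0
    rw [besselCoeff_succ hμ, div_le_iff₀ (by positivity)]
    calc besselCoeff μ k ≤ besselCoeff μ 0 * (μ + 1)⁻¹ ^ k / k ! := ih
      _ ≤ besselCoeff μ 0 * (μ + 1)⁻¹ ^ k / k ! * ((μ + 1)⁻¹ * (μ + k + 1)) :=
        le_mul_of_one_le_right (by positivity) h1
      _ = _ := by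
        rw [pow_succ, Nat.factorial_succ]
        push_cast
        field_simp

theorem summable_besselCoeff_mul_pow (hμ : -1 < μ) (y : ℝ) :
    Summable fun k => besselCoeff μ k * y ^ k := by
  refine .of_norm_bounded
    ((summable_pow_div_factorial ((μ + 1)⁻¹ * |y|)).mul_left (besselCoeff μ 0)) fun k => ?_
  calc ‖besselCoeff μ k * y ^ k‖ = besselCoeff μ k * |y| ^ k := by
        rw [norm_mul, norm_pow, Real.norm_eq_abs, Real.norm_eq_abs,
          abs_of_pos (besselCoeff_pos hμ k)]
    _ ≤ besselCoeff μ 0 * (μ + 1)⁻¹ ^ k / k ! * |y| ^ k := by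
        gcongr
        exact besselCoeff_le hμ k
    _ = _ := by ring

theorem besselSeries_pos (hμ : -1 < μ) {y : ℝ} (hy : 0 ≤ y) : 0 < besselSeries μ y :=
  (summable_besselCoeff_mul_pow hμ y).tsum_pos
    (fun k => mul_nonneg (besselCoeff_pos hμ k).le (pow_nonneg hy k)) 0
    (by simpa using besselCoeff_pos hμ 0)

theorem hasDerivAt_besselSeries (hμ : -1 < μ) (y : ℝ) :
    HasDerivAt (besselSeries μ) (besselSeries (μ + 1) y) y := by
  refine (hasDerivAt_tsum_mul_pow (summable_besselCoeff_mul_pow hμ) y).congr_deriv ?_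
  exact tsum_congr fun k => by rw [succ_mul_besselCoeff_succ hμ]

theorem strictAntiOn_besselSeries_add_one_div (hμ : -1 < μ) :
    StrictAntiOn (fun y => besselSeries (μ + 1) y / besselSeries μ y) (Ici 0) := by
  have hc : StrictAnti fun k : ℕ => (μ + k + 1)⁻¹ := fun j k hjk =>
    inv_strictAnti₀ (add_natCast_add_one_pos hμ j) (by gcongr)
  have hshift : besselSeries (μ + 1) = fun y => ∑' k, besselCoeff μ k * (μ + k + 1)⁻¹ * y ^ k := by
    ext y
    exact tsum_congr fun k => by rw [besselCoeff_add_one hμ]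
  rw [hshift]
  refine strictAntiOn_tsum_mul_pow_div_tsum_mul_pow (besselCoeff_pos hμ) hc
    (fun y _ => summable_besselCoeff_mul_pow hμ y) (fun y _ => ?_)
  simpa only [besselCoeff_add_one hμ] using
    summable_besselCoeff_mul_pow (μ := μ + 1) (by linarith) y

theorem besselI_eq_rpow_mul_besselSeries {x : ℝ} (hx : 0 < x) :
    besselI μ x = (x / 2) ^ μ * besselSeries μ ((x / 2) ^ 2) := by
  rw [besselI, besselSeries, ← tsum_mul_left]
  refine tsum_congr fun k => ?_
  rw [rpow_add (by positivity), show (2 * (k : ℝ)) = ((2 * k : ℕ) : ℝ) by push_cast; ring,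
    rpow_natCast, pow_mul, besselCoeff]
  ring

theorem hasDerivAt_besselI (hμ : -1 < μ) {x : ℝ} (hx : 0 < x) :
    HasDerivAt (besselI μ) ((x / 2) ^ μ *
      (μ / x * besselSeries μ ((x / 2) ^ 2) + x / 2 * besselSeries (μ + 1) ((x / 2) ^ 2))) x := by
  have hhalf : HasDerivAt (fun y : ℝ => y / 2) (1 / 2) x := (hasDerivAt_id x).div_const 2
  have hpow := hhalf.rpow_const (p := μ) (Or.inl (by positivity))
  have hseries := (hasDerivAt_besselSeries hμ ((x / 2) ^ 2)).comp x (hhalf.pow 2)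
  simp only [Function.comp_def, Pi.pow_apply] at hseries
  have heq : besselI μ =ᶠ[nhds x] fun y => (y / 2) ^ μ * besselSeries μ ((y / 2) ^ 2) :=
    Filter.eventuallyEq_of_mem (Ioi_mem_nhds hx) fun y hy => besselI_eq_rpow_mul_besselSeries hy
  refine ((hpow.mul hseries).congr_of_eventuallyEq heq).congr_deriv ?_
  rw [rpow_sub_one (by positivity)]
  field_simp
  ring

theorem logDeriv_besselI (hμ : -1 < μ) {x : ℝ} (hx : 0 < x) :
    logDeriv (besselI μ) x =
      μ / x + x / 2 * (besselSeries (μ + 1) ((x / 2) ^ 2) / besselSeries μ ((x / 2) ^ 2)) := by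
  have := besselSeries_pos hμ (sq_nonneg (x / 2))
  have : 0 < (x / 2) ^ μ := by positivity
  rw [logDeriv_apply, (hasDerivAt_besselI hμ hx).deriv, besselI_eq_rpow_mul_besselSeries hx]
  generalize (x / 2) ^ 2 = u at *
  field_simp

end

theorem strictAntiOn_rpow_neg_mul_logDeriv_besselI {ν α : ℝ} (hν : 0 ≤ ν) (hα : 1 ≤ α) :
    StrictAntiOn (fun x => x ^ (-α) * logDeriv (besselI ν) x) (Ioi 0) := by
  set ρ := fun x : ℝ => besselSeries (ν + 1) ((x / 2) ^ 2) / besselSeries ν ((x / 2) ^ 2)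
  have hρ_pos : ∀ x : ℝ, 0 < ρ x := fun x =>
    div_pos (besselSeries_pos (by linarith) (sq_nonneg _))
      (besselSeries_pos (by linarith) (sq_nonneg _))
  have hρ_anti : StrictAntiOn ρ (Ioi 0) := fun x hx y _ hxy =>
    strictAntiOn_besselSeries_add_one_div (by linarith) (mem_Ici.mpr (sq_nonneg _))
      (mem_Ici.mpr (sq_nonneg _))
      (pow_lt_pow_left₀ (by linarith) (by linarith [mem_Ioi.mp hx]) two_ne_zero)
  have hsplit : ∀ x : ℝ, 0 < x →
      x ^ (-α) * logDeriv (besselI ν) x = ν * x ^ (-α - 1) + x ^ (-α + 1) * ρ x / 2 := by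
    intro x hx
    rw [logDeriv_besselI (by linarith) hx, rpow_sub_one hx.ne', rpow_add_one hx.ne']
    simp only [ρ]
    field_simp
  intro x hx y hy hxy
  simp only
  rw [hsplit x hx, hsplit y hy]
  have h₁ : ν * y ^ (-α - 1) ≤ ν * x ^ (-α - 1) :=
    mul_le_mul_of_nonneg_left (rpow_le_rpow_of_nonpos hx hxy.le (by linarith)) hν
  have h₂ : y ^ (-α + 1) * ρ y < x ^ (-α + 1) * ρ x :=
    mul_lt_mul' (rpow_le_rpow_of_nonpos hx hxy.le (by linarith)) (hρ_anti hx hy hxy)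
      (hρ_pos y).le (rpow_pos_of_pos hx _)
  linarith

theorem F_strictMono (ν α r : ℝ) (hν : 0 ≤ ν) (hα : 1 ≤ α) (hr : 0 < r) :
    StrictMonoOn (fun η : ℝ => η ^ α * deriv (besselI ν) (η⁻¹ * r) / besselI ν (η⁻¹ * r))
      (Set.Ioi 0) := by
  have hF : ∀ η : ℝ, 0 < η → η ^ α * deriv (besselI ν) (η⁻¹ * r) / besselI ν (η⁻¹ * r) =
      r ^ α * ((η⁻¹ * r) ^ (-α) * logDeriv (besselI ν) (η⁻¹ * r)) := by
    intro η hη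
    have : 0 < η ^ α := rpow_pos_of_pos hη α
    have : 0 < r ^ α := rpow_pos_of_pos hr α
    rw [logDeriv_apply, mul_rpow (inv_nonneg.mpr hη.le) hr.le, inv_rpow hη.le, rpow_neg hη.le,
      rpow_neg hr.le]
    field_simp
  intro η₁ h₁ η₂ h₂ hlt
  simp only
  rw [hF η₁ h₁, hF η₂ h₂]
  have hlt' : η₂⁻¹ * r < η₁⁻¹ * r := by gcongr
  exact mul_lt_mul_of_pos_left
    (strictAntiOn_rpow_neg_mul_logDeriv_besselI hν hα (mul_pos (inv_pos.mpr h₂) hr)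
      (mul_pos (inv_pos.mpr h₁) hr) hlt')
    (rpow_pos_of_pos hr α)
end

section
/- Fix ν ≥ 0 and r₁ ∈ (0,1). Define ρ(σ) = (σ I_ν'(r₁/√σ) I_ν(r₁) − I_ν(r₁/√σ) I_ν'(r₁)) / (σ I_ν'(r₁/√σ) K_ν(r₁) − I_ν(r₁/√σ) K_ν'(r₁)). If σ₁, σ₂ > 0 with ρ(σ₁) = ρ(σ₂) (and both denominators nonzero), then σ₁ = σ₂. -/
/-- Modified Bessel function of the second kind of order ν. -/
noncomputable def besselK (ν : ℝ) (x : ℝ) : ℝ :=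
  ∫ t in Set.Ioi (0 : ℝ), Real.exp (-x * Real.cosh t) * Real.cosh (ν * t)

/-!
Cross-multiplying turns `ρ(σ₁) = ρ(σ₂)` into `(t(σ₁) - t(σ₂)) · W = 0`, where
`t(σ) = σ I_ν'(x) / I_ν(x)` with `x = r₁ / √σ`, and `W = I_ν' K_ν - I_ν K_ν'` at `r₁` is positive
because `I_ν, I_ν', K_ν > 0` and `K_ν` is decreasing. As `σ = r₁² / x²`, `t(σ) = r₁² S(x) / x³`
with `S = x I_ν' / I_ν`, so it suffices that `S / x³` is strictly decreasing. The Bessel equation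
gives the Riccati equation `x S' = x² + ν² - S²`, hence `(S / x³)' = -(S² + 3S - x² - ν²) / x⁴`.
The gap `S² + 3S - x² - ν²` is positive for `x ≤ 1` by the power series
(`S - ν ≥ 3x² / (8(ν + 1))`), and it stays positive because its derivative is positive at any zero.
-/

open Real Set MeasureTheory

section Series

variable {ν x : ℝ}

noncomputable def besselITerm (ν : ℝ) (k : ℕ) (x : ℝ) : ℝ :=
  (x / 2) ^ (ν + 2 * (k : ℝ)) / ((Nat.factorial k : ℝ) * Gamma (ν + (k : ℝ) + 1))

lemma besselITerm_pos (hν : 0 ≤ ν) (hx : 0 < x) (k : ℕ) : 0 < besselITerm ν k x := by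
  have := Gamma_pos_of_pos (by positivity : 0 < ν + k + 1)
  unfold besselITerm
  positivity

lemma besselITerm_le_of_le (hν : 0 ≤ ν) {y : ℝ} (hy : 0 < y) (hyx : y ≤ x) (k : ℕ) :
    besselITerm ν k y ≤ besselITerm ν k x := by
  have := Gamma_pos_of_pos (by positivity : 0 < ν + k + 1)
  unfold besselITerm
  gcongr

lemma besselITerm_succ (hν : 0 ≤ ν) (hx : 0 < x) (k : ℕ) :
    besselITerm ν (k + 1) x = (x / 2) ^ 2 / ((k + 1) * (ν + k + 1)) * besselITerm ν k x := by
  have hΓ : Gamma (ν + ((k + 1 : ℕ) : ℝ) + 1) = (ν + k + 1) * Gamma (ν + k + 1) := by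
    rw [← Gamma_add_one (by positivity)]; push_cast; ring_nf
  have hpow : (x / 2) ^ (ν + 2 * ((k + 1 : ℕ) : ℝ))
      = (x / 2) ^ 2 * (x / 2) ^ (ν + 2 * (k : ℝ)) := by
    rw [← rpow_natCast, ← rpow_add (by positivity)]; push_cast; ring_nf
  have := Gamma_pos_of_pos (by positivity : 0 < ν + k + 1)
  simp only [besselITerm, hΓ, hpow, Nat.factorial_succ]
  push_cast
  field_simp

lemma besselITerm_le_mul_pow_div_factorial (hν : 0 ≤ ν) (hx : 0 < x) (k : ℕ) :
    besselITerm ν k x ≤ besselITerm ν 0 x * ((x / 2) ^ 2) ^ k / k.factorial := by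
  induction k with
  | zero => simp
  | succ k ih =>
    rw [besselITerm_succ hν hx, Nat.factorial_succ, pow_succ]
    have : (x / 2) ^ 2 / ((k + 1) * (ν + k + 1)) ≤ (x / 2) ^ 2 / (k + 1) :=
      div_le_div_of_nonneg_left (by positivity) (by positivity) (by nlinarith)
    calc (x / 2) ^ 2 / ((k + 1) * (ν + k + 1)) * besselITerm ν k x
        ≤ (x / 2) ^ 2 / (k + 1) * (besselITerm ν 0 x * ((x / 2) ^ 2) ^ k / k.factorial) :=
          mul_le_mul this ih (besselITerm_pos hν hx k).le (by positivity)
      _ = _ := by push_cast; field_simp; ring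

lemma summable_mul_besselITerm {w : ℕ → ℝ} {A B : ℝ} (hw : ∀ k, |w k| ≤ A * B ^ k)
    (hν : 0 ≤ ν) (hx : 0 < x) : Summable fun k => w k * besselITerm ν k x := by
  refine .of_norm_bounded
    ((summable_pow_div_factorial (B * (x / 2) ^ 2)).mul_left (A * besselITerm ν 0 x)) fun k => ?_
  have hc := besselITerm_pos hν hx k
  rw [norm_mul, norm_eq_abs, norm_of_nonneg hc.le]
  calc |w k| * besselITerm ν k x
      ≤ A * B ^ k * (besselITerm ν 0 x * ((x / 2) ^ 2) ^ k / k.factorial) :=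
        mul_le_mul (hw k) (besselITerm_le_mul_pow_div_factorial hν hx k) hc.le
          ((abs_nonneg _).trans (hw k))
    _ = _ := by rw [mul_pow]; ring

lemma hasDerivAt_besselITerm (hx : 0 < x) (k : ℕ) :
    HasDerivAt (besselITerm ν k) ((ν + 2 * k) * besselITerm ν k x / x) x := by
  have h := ((hasDerivAt_id x).div_const 2).rpow_const (p := ν + 2 * (k : ℝ))
    (Or.inl (by positivity))
  refine (h.div_const ((Nat.factorial k : ℝ) * Gamma (ν + (k : ℝ) + 1))).congr_deriv ?_
  rw [besselITerm, rpow_sub_one (by positivity)]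
  simp only [id]
  field_simp

noncomputable def besselISeries (ν : ℝ) (w : ℕ → ℝ) (x : ℝ) : ℝ :=
  ∑' k, w k * besselITerm ν k x

lemma besselI_eq_besselISeries (ν : ℝ) : besselI ν = besselISeries ν fun _ => 1 := by
  ext x
  simp [besselI, besselISeries, besselITerm]

lemma abs_add_two_mul_le (hν : 0 ≤ ν) (k : ℕ) : |ν + 2 * k| ≤ (ν + 2) * 2 ^ k := by
  have hk : (k : ℝ) ≤ 2 ^ k := by exact_mod_cast Nat.lt_two_pow_self.le
  have : (1 : ℝ) ≤ 2 ^ k := one_le_pow₀ (by norm_num)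
  rw [abs_of_nonneg (by positivity)]
  nlinarith

lemma hasDerivAt_besselISeries {w : ℕ → ℝ} {A B : ℝ} (hw : ∀ k, |w k| ≤ A * B ^ k)
    (hν : 0 ≤ ν) (hx : 0 < x) :
    HasDerivAt (besselISeries ν w) (besselISeries ν (fun k => w k * (ν + 2 * k)) x / x) x := by
  have hw' : ∀ k, |w k * (ν + 2 * k)| ≤ A * (ν + 2) * (2 * B) ^ k := fun k => by
    rw [abs_mul, mul_pow]
    calc |w k| * |ν + 2 * k| ≤ A * B ^ k * ((ν + 2) * 2 ^ k) :=
          mul_le_mul (hw k) (abs_add_two_mul_le hν k) (abs_nonneg _) ((abs_nonneg _).trans (hw k))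
      _ = _ := by ring
  have hu : Summable fun k => 2 / x * (|w k * (ν + 2 * k)| * besselITerm ν k (2 * x)) :=
    (summable_mul_besselITerm (w := fun k => |w k * (ν + 2 * k)|) (by simpa using hw') hν
      (by positivity)).mul_left _
  have hbound : ∀ k, ∀ y ∈ Ioo (x / 2) (2 * x), ‖w k * ((ν + 2 * k) * besselITerm ν k y / y)‖
      ≤ 2 / x * (|w k * (ν + 2 * k)| * besselITerm ν k (2 * x)) := by
    rintro k y ⟨hxy, hy2x⟩
    have hy : 0 < y := by linarith
    have hy_inv : y⁻¹ ≤ 2 / x := by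
      rw [inv_le_comm₀ hy (by positivity), inv_div]; linarith
    have := besselITerm_le_of_le hν hy hy2x.le k
    have := besselITerm_pos hν (by positivity : 0 < 2 * x) k
    rw [norm_eq_abs, show w k * ((ν + 2 * k) * besselITerm ν k y / y)
      = w k * (ν + 2 * k) * besselITerm ν k y * y⁻¹ by ring, abs_mul, abs_mul,
      abs_of_pos (besselITerm_pos hν hy k), abs_of_pos (inv_pos.2 hy), mul_comm (2 / x)]
    gcongr
  have hxt : x ∈ Ioo (x / 2) (2 * x) := ⟨by linarith, by linarith⟩
  have h := hasDerivAt_tsum_of_isPreconnected hu isOpen_Ioo isPreconnected_Ioo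
    (g := fun k y => w k * besselITerm ν k y)
    (fun k y hy => (hasDerivAt_besselITerm (by linarith [hy.1]) k).const_mul (w k))
    hbound hxt (summable_mul_besselITerm hw hν hx) hxt
  refine h.congr_deriv ?_
  rw [besselISeries, ← tsum_div_const]
  congr 1 with k
  ring

end Series

section Ratio

variable {ν x : ℝ}

lemma summable_besselITerm (hν : 0 ≤ ν) (hx : 0 < x) : Summable fun k => besselITerm ν k x := by
  simpa using summable_mul_besselITerm (w := fun _ => 1) (A := 1) (B := 1) (by simp) hν hx

lemma besselI_pos (hν : 0 ≤ ν) (hx : 0 < x) : 0 < besselI ν x :=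
  (summable_besselITerm hν hx).tsum_pos (fun k => (besselITerm_pos hν hx k).le) 0
    (besselITerm_pos hν hx 0)

lemma hasDerivAt_besselI_s19 (hν : 0 ≤ ν) (hx : 0 < x) :
    HasDerivAt (besselI ν) (besselISeries ν (fun k => ν + 2 * k) x / x) x := by
  rw [besselI_eq_besselISeries]
  simpa using hasDerivAt_besselISeries (w := fun _ => 1) (A := 1) (B := 1) (by simp) hν hx

lemma besselISeries_sq (hν : 0 ≤ ν) (hx : 0 < x) :
    besselISeries ν (fun k => (ν + 2 * k) ^ 2) x = (x ^ 2 + ν ^ 2) * besselI ν x := by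
  have hc := summable_besselITerm hν hx
  have hsq : Summable fun k => (ν + 2 * k) ^ 2 * besselITerm ν k x := by
    refine summable_mul_besselITerm (A := (ν + 2) ^ 2) (B := 4) (fun k => ?_) hν hx
    rw [abs_pow, show (4 : ℝ) ^ k = (2 ^ k) ^ 2 by rw [← pow_mul, mul_comm, pow_mul]; norm_num,
      ← mul_pow]
    exact pow_le_pow_left₀ (abs_nonneg _) (abs_add_two_mul_le hν k) 2
  have hgap : Summable fun k => ((ν + 2 * k) ^ 2 - ν ^ 2) * besselITerm ν k x :=
    (hsq.sub (hc.mul_left (ν ^ 2))).congr fun k => by ring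
  -- `(ν + 2(k+1))² - ν² = 4(k+1)(ν+k+1)` cancels the denominator of `besselITerm_succ`
  have hshift : ∀ k : ℕ, ((ν + 2 * ((k + 1 : ℕ) : ℝ)) ^ 2 - ν ^ 2) * besselITerm ν (k + 1) x
      = x ^ 2 * besselITerm ν k x := fun k => by
    rw [besselITerm_succ hν hx]
    field_simp
    push_cast
    ring
  have hsplit : besselISeries ν (fun k => (ν + 2 * k) ^ 2) x - ν ^ 2 * besselI ν x
      = ∑' k, ((ν + 2 * k) ^ 2 - ν ^ 2) * besselITerm ν k x := by
    rw [besselISeries, show besselI ν x = ∑' k, besselITerm ν k x from rfl, ← tsum_mul_left,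
      ← hsq.tsum_sub (hc.mul_left _)]
    congr 1 with k
    ring
  have htail : ∑' k, ((ν + 2 * k) ^ 2 - ν ^ 2) * besselITerm ν k x = x ^ 2 * besselI ν x := by
    rw [hgap.tsum_eq_zero_add, tsum_congr hshift, tsum_mul_left]
    simp [besselI, besselITerm]
  linarith

lemma besselITerm_one (hν : 0 ≤ ν) (hx : 0 < x) :
    besselITerm ν 1 x = (x / 2) ^ 2 / (ν + 1) * besselITerm ν 0 x := by
  simpa using besselITerm_succ hν hx 0

lemma mul_besselI_add_besselITerm_one_le (hν : 0 ≤ ν) (hx : 0 < x) :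
    ν * besselI ν x + 2 * besselITerm ν 1 x ≤ besselISeries ν (fun k => ν + 2 * k) x := by
  have hc := summable_besselITerm hν hx
  have hm := summable_mul_besselITerm (abs_add_two_mul_le hν) hν hx
  have htail : Summable fun k => 2 * k * besselITerm ν k x :=
    (hm.sub (hc.mul_left ν)).congr fun k => by ring
  have hsplit : besselISeries ν (fun k => ν + 2 * k) x - ν * besselI ν x
      = ∑' k, 2 * k * besselITerm ν k x := by
    rw [besselISeries, show besselI ν x = ∑' k, besselITerm ν k x from rfl, ← tsum_mul_left,
      ← hm.tsum_sub (hc.mul_left _)]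
    congr 1 with k
    ring
  have h1 : 2 * besselITerm ν 1 x ≤ ∑' k, 2 * k * besselITerm ν k x := by
    simpa using htail.le_tsum 1 fun k _ => by have := besselITerm_pos hν hx k; positivity
  linarith

lemma besselI_le_of_le_one (hν : 0 ≤ ν) (hx : 0 < x) (hx1 : x ≤ 1) :
    besselI ν x ≤ 4 / 3 * besselITerm ν 0 x := by
  have h0 := besselITerm_pos hν hx 0
  have hq : (x / 2) ^ 2 ≤ 1 / 4 := by nlinarith
  have hterm : ∀ k, besselITerm ν k x ≤ besselITerm ν 0 x * (1 / 4) ^ k := fun k => by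
    refine (besselITerm_le_mul_pow_div_factorial hν hx k).trans ?_
    rw [mul_div_assoc]
    gcongr
    calc ((x / 2) ^ 2) ^ k / k.factorial ≤ ((x / 2) ^ 2) ^ k :=
          div_le_self (by positivity) (by exact_mod_cast k.factorial_pos)
      _ ≤ (1 / 4) ^ k := by gcongr
  calc besselI ν x = ∑' k, besselITerm ν k x := rfl
    _ ≤ ∑' k : ℕ, besselITerm ν 0 x * (1 / 4) ^ k :=
        (summable_besselITerm hν hx).tsum_le_tsum hterm
          ((summable_geometric_of_lt_one (by norm_num) (by norm_num)).mul_left _)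
    _ = 4 / 3 * besselITerm ν 0 x := by
        rw [tsum_mul_left, tsum_geometric_of_lt_one (by norm_num) (by norm_num)]
        ring

noncomputable def besselIRatio (ν x : ℝ) : ℝ :=
  besselISeries ν (fun k => ν + 2 * k) x / besselI ν x

lemma besselIRatio_eq (hν : 0 ≤ ν) (hx : 0 < x) :
    besselIRatio ν x = x * deriv (besselI ν) x / besselI ν x := by
  rw [(hasDerivAt_besselI_s19 hν hx).deriv, mul_div_cancel₀ _ hx.ne', besselIRatio]

lemma deriv_besselI_pos (hν : 0 ≤ ν) (hx : 0 < x) : 0 < deriv (besselI ν) x := by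
  have := mul_besselI_add_besselITerm_one_le hν hx
  have := besselI_pos hν hx
  have := besselITerm_pos hν hx 1
  rw [(hasDerivAt_besselI_s19 hν hx).deriv]
  exact div_pos (by nlinarith) hx

lemma besselIRatio_pos (hν : 0 ≤ ν) (hx : 0 < x) : 0 < besselIRatio ν x := by
  rw [besselIRatio_eq hν hx]
  exact div_pos (mul_pos hx (deriv_besselI_pos hν hx)) (besselI_pos hν hx)

lemma le_besselIRatio_sub (hν : 0 ≤ ν) (hx : 0 < x) (hx1 : x ≤ 1) :
    3 * x ^ 2 / (8 * (ν + 1)) ≤ besselIRatio ν x - ν := by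
  have hI := besselI_pos hν hx
  have hT := mul_besselI_add_besselITerm_one_le hν hx
  have hc₁ : 2 * besselITerm ν 1 x = 3 * x ^ 2 / (8 * (ν + 1)) * (4 / 3 * besselITerm ν 0 x) := by
    rw [besselITerm_one hν hx]
    field_simp
    ring
  have hbound := mul_le_mul_of_nonneg_left (besselI_le_of_le_one hν hx hx1)
    (by positivity : 0 ≤ 3 * x ^ 2 / (8 * (ν + 1)))
  rw [besselIRatio, le_sub_iff_add_le, le_div_iff₀ hI]
  linarith

lemma hasDerivAt_besselIRatio (hν : 0 ≤ ν) (hx : 0 < x) :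
    HasDerivAt (besselIRatio ν) ((x ^ 2 + ν ^ 2 - besselIRatio ν x ^ 2) / x) x := by
  have hT := hasDerivAt_besselISeries (w := fun k => ν + 2 * k) (abs_add_two_mul_le hν) hν hx
  have hI := besselI_pos hν hx
  refine (hT.div (hasDerivAt_besselI_s19 hν hx) hI.ne').congr_deriv ?_
  have hsq := besselISeries_sq hν hx
  simp only [← sq]
  rw [hsq, besselIRatio]
  field_simp

end Ratio

section Gap

variable {ν x : ℝ}

noncomputable def besselGap (ν x : ℝ) : ℝ :=
  besselIRatio ν x ^ 2 + 3 * besselIRatio ν x - x ^ 2 - ν ^ 2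

lemma besselGap_pos_of_le_one (hν : 0 ≤ ν) (hx : 0 < x) (hx1 : x ≤ 1) : 0 < besselGap ν x := by
  have hS := le_besselIRatio_sub hν hx hx1
  set d := 3 * x ^ 2 / (8 * (ν + 1))
  have hd : 0 ≤ d := by positivity
  have hlow : 0 < (2 * ν + 3) * d + 3 * ν - x ^ 2 := by
    have : (2 * ν + 3) * d + 3 * ν - x ^ 2
        = (x ^ 2 + ν * (24 * ν + 24 - 2 * x ^ 2)) / (8 * (ν + 1)) := by
      simp only [d]; field_simp; ring
    rw [this]
    have : 0 ≤ ν * (24 * ν + 24 - 2 * x ^ 2) := mul_nonneg hν (by nlinarith)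
    positivity
  unfold besselGap
  nlinarith

lemma hasDerivAt_besselGap (hν : 0 ≤ ν) (hx : 0 < x) :
    HasDerivAt (besselGap ν)
      ((2 * besselIRatio ν x + 3) * ((x ^ 2 + ν ^ 2 - besselIRatio ν x ^ 2) / x) - 2 * x) x := by
  have hS := hasDerivAt_besselIRatio hν hx
  refine ((((hS.pow 2).add (hS.const_mul 3)).sub (hasDerivAt_pow 2 x)).sub_const
    (ν ^ 2)).congr_deriv ?_
  push_cast
  ring

-- at a zero of the gap, `x² + ν² - S² = 3S` and `x² ≤ S² + 3S`, so the derivative is at least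
-- `(4S² + 3S) / x`
lemma deriv_besselGap_pos_of_eq_zero (hν : 0 ≤ ν) (hx : 0 < x) (h : besselGap ν x = 0) :
    0 < (2 * besselIRatio ν x + 3) * ((x ^ 2 + ν ^ 2 - besselIRatio ν x ^ 2) / x) - 2 * x := by
  have hS := besselIRatio_pos hν hx
  unfold besselGap at h
  rw [show x ^ 2 + ν ^ 2 - besselIRatio ν x ^ 2 = 3 * besselIRatio ν x by linarith,
    mul_div_assoc', sub_pos, lt_div_iff₀ hx]
  nlinarith

lemma besselGap_nonneg (hν : 0 ≤ ν) (hx : 0 < x) : 0 ≤ besselGap ν x := by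
  have ha : 0 < min x 1 := lt_min hx one_pos
  have hderiv : ∀ y ∈ Ico (min x 1) x, HasDerivWithinAt (fun y => -besselGap ν y)
      (-((2 * besselIRatio ν y + 3) * ((y ^ 2 + ν ^ 2 - besselIRatio ν y ^ 2) / y) - 2 * y))
      (Ici y) y := fun y hy =>
    (hasDerivAt_besselGap hν (ha.trans_le hy.1)).neg.hasDerivWithinAt
  have := image_le_of_deriv_right_lt_deriv_boundary (B := fun _ => 0) (B' := fun _ => 0)
    (fun y hy => (hasDerivAt_besselGap hν (ha.trans_le hy.1)).continuousAt.neg.continuousWithinAt)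
    hderiv (by simpa using (besselGap_pos_of_le_one hν ha (min_le_right _ _)).le)
    (fun _ => hasDerivAt_const _ _)
    (fun y hy h => by
      simpa using deriv_besselGap_pos_of_eq_zero hν (ha.trans_le hy.1) (neg_eq_zero.1 h))
    ⟨min_le_left _ _, le_rfl⟩
  simpa using this

lemma besselGap_pos (hν : 0 ≤ ν) (hx : 0 < x) : 0 < besselGap ν x := by
  refine (besselGap_nonneg hν hx).lt_of_ne fun h => ?_
  have hmin : IsLocalMin (besselGap ν) x := by
    filter_upwards [Ioi_mem_nhds hx] with y hy
    rw [← h]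
    exact besselGap_nonneg hν hy
  exact (deriv_besselGap_pos_of_eq_zero hν hx h.symm).ne'
    (hmin.hasDerivAt_eq_zero (hasDerivAt_besselGap hν hx))

lemma strictAntiOn_besselIRatio_div_pow_three (hν : 0 ≤ ν) :
    StrictAntiOn (fun x => besselIRatio ν x / x ^ 3) (Ioi 0) := by
  have hderiv : ∀ x ∈ Ioi (0 : ℝ),
      HasDerivAt (fun x => besselIRatio ν x / x ^ 3) (-besselGap ν x / x ^ 4) x := fun x hx => by
    refine ((hasDerivAt_besselIRatio hν hx).div (hasDerivAt_pow 3 x)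
      (pow_ne_zero 3 (ne_of_gt hx))).congr_deriv ?_
    have : x ≠ 0 := ne_of_gt hx
    unfold besselGap
    field_simp
    ring
  refine strictAntiOn_of_hasDerivWithinAt_neg (convex_Ioi 0)
    (fun x hx => (hderiv x hx).continuousAt.continuousWithinAt)
    (fun x hx => (hderiv x (interior_subset hx)).hasDerivWithinAt) fun x hx => ?_
  rw [interior_Ioi] at hx
  exact div_neg_of_neg_of_pos (neg_neg_of_pos (besselGap_pos hν hx)) (pow_pos hx 4)

end Gap

section BesselK

variable {ν x : ℝ}

lemma cosh_le_exp_abs_mul (ν : ℝ) {t : ℝ} (ht : 0 ≤ t) : cosh (ν * t) ≤ exp (|ν| * t) := by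
  rw [← cosh_abs, abs_mul, abs_of_nonneg ht, cosh_eq]
  have := mul_nonneg (abs_nonneg ν) ht
  have : exp (-(|ν| * t)) ≤ exp (|ν| * t) := exp_le_exp.2 (by linarith)
  linarith

lemma sq_div_four_le_cosh {t : ℝ} (ht : 0 ≤ t) : t ^ 2 / 4 ≤ cosh t := by
  rw [cosh_eq]
  nlinarith [quadratic_le_exp_of_nonneg ht, add_one_le_exp (-t)]

lemma besselK_integrand_le (ν : ℝ) (hx : 0 < x) {t : ℝ} (ht : 0 ≤ t) :
    exp (-x * cosh t) * cosh (ν * t) ≤ exp ((|ν| + 1) ^ 2 / x) * exp (-t) := by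
  have hsq : (|ν| + 1) * t - x * (t ^ 2 / 4) ≤ (|ν| + 1) ^ 2 / x := by
    rw [le_div_iff₀ hx]
    nlinarith [sq_nonneg (x * t / 2 - (|ν| + 1))]
  calc exp (-x * cosh t) * cosh (ν * t) ≤ exp (-x * (t ^ 2 / 4)) * exp (|ν| * t) :=
        mul_le_mul (exp_le_exp.2 (by nlinarith [sq_div_four_le_cosh ht]))
          (cosh_le_exp_abs_mul ν ht) (cosh_pos _).le (exp_pos _).le
    _ ≤ exp ((|ν| + 1) ^ 2 / x) * exp (-t) := by
        rw [← exp_add, ← exp_add]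
        exact exp_le_exp.2 (by linarith)

lemma integrableOn_besselK_integrand (ν : ℝ) (hx : 0 < x) :
    IntegrableOn (fun t => exp (-x * cosh t) * cosh (ν * t)) (Ioi 0) := by
  refine Integrable.mono'
    ((exp_neg_integrableOn_Ioi 0 one_pos).const_mul (exp ((|ν| + 1) ^ 2 / x))) (by fun_prop) ?_
  filter_upwards [ae_restrict_mem measurableSet_Ioi] with t ht
  rw [norm_of_nonneg (by positivity)]
  simpa using besselK_integrand_le ν hx (le_of_lt ht)

lemma besselK_pos (ν : ℝ) (hx : 0 < x) : 0 < besselK ν x := by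
  rw [besselK, setIntegral_pos_iff_support_of_nonneg_ae (.of_forall fun t => by positivity)
    (integrableOn_besselK_integrand ν hx)]
  have : Function.support (fun t => exp (-x * cosh t) * cosh (ν * t)) = univ :=
    eq_univ_of_forall fun t => (by positivity : 0 < exp (-x * cosh t) * cosh (ν * t)).ne'
  rw [this, univ_inter, volume_Ioi]
  exact ENNReal.zero_lt_top

lemma antitoneOn_besselK (ν : ℝ) : AntitoneOn (besselK ν) (Ioi 0) := fun x hx y hy hxy =>
  setIntegral_mono (integrableOn_besselK_integrand ν hy) (integrableOn_besselK_integrand ν hx)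
    fun t => by
      have := cosh_pos t
      gcongr

lemma deriv_besselK_nonpos (ν : ℝ) (hx : 0 < x) : deriv (besselK ν) x ≤ 0 := by
  rw [← derivWithin_of_mem_nhds (Ioi_mem_nhds hx)]
  exact (antitoneOn_besselK ν).derivWithin_nonpos

end BesselK

lemma deriv_besselI_mul_besselK_sub_pos {ν x : ℝ} (hν : 0 ≤ ν) (hx : 0 < x) :
    0 < deriv (besselI ν) x * besselK ν x - besselI ν x * deriv (besselK ν) x := by
  nlinarith [mul_pos (deriv_besselI_pos hν hx) (besselK_pos ν hx),
    mul_nonneg (besselI_pos hν hx).le (neg_nonneg.2 (deriv_besselK_nonpos ν hx))]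

lemma mul_eq_mul_of_div_eq_div_of_det_ne_zero {K : Type*} [Field K] {a b c d p₁ q₁ p₂ q₂ : K}
    (h₁ : p₁ * c - q₁ * d ≠ 0) (h₂ : p₂ * c - q₂ * d ≠ 0) (hdet : a * d - b * c ≠ 0)
    (h : (p₁ * a - q₁ * b) / (p₁ * c - q₁ * d) = (p₂ * a - q₂ * b) / (p₂ * c - q₂ * d)) :
    p₁ * q₂ = p₂ * q₁ := by
  rw [div_eq_div_iff h₁ h₂] at h
  have : (p₁ * q₂ - p₂ * q₁) * (a * d - b * c) = 0 := by linear_combination -h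
  exact sub_eq_zero.1 ((mul_eq_zero.1 this).resolve_right hdet)

lemma mul_deriv_besselI_div_eq {ν r σ : ℝ} (hν : 0 ≤ ν) (hr : 0 < r) (hσ : 0 < σ) :
    σ * deriv (besselI ν) (r / √σ) / besselI ν (r / √σ)
      = r ^ 2 * (besselIRatio ν (r / √σ) / (r / √σ) ^ 3) := by
  have hx : 0 < r / √σ := by positivity
  have hσx : σ * (r / √σ) ^ 2 = r ^ 2 := by
    rw [div_pow, sq_sqrt hσ.le]; field_simp
  rw [besselIRatio_eq hν hx, ← hσx]
  field_simp

theorem rho_injective (ν r₁ σ₁ σ₂ : ℝ) (hν : 0 ≤ ν) (hr₁ : r₁ ∈ Set.Ioo (0 : ℝ) 1)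
    (hσ₁ : 0 < σ₁) (hσ₂ : 0 < σ₂)
    (hden₁ : σ₁ * deriv (besselI ν) (r₁ / Real.sqrt σ₁) * besselK ν r₁ -
      besselI ν (r₁ / Real.sqrt σ₁) * deriv (besselK ν) r₁ ≠ 0)
    (hden₂ : σ₂ * deriv (besselI ν) (r₁ / Real.sqrt σ₂) * besselK ν r₁ -
      besselI ν (r₁ / Real.sqrt σ₂) * deriv (besselK ν) r₁ ≠ 0)
    (heq : (σ₁ * deriv (besselI ν) (r₁ / Real.sqrt σ₁) * besselI ν r₁ -
        besselI ν (r₁ / Real.sqrt σ₁) * deriv (besselI ν) r₁) /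
      (σ₁ * deriv (besselI ν) (r₁ / Real.sqrt σ₁) * besselK ν r₁ -
        besselI ν (r₁ / Real.sqrt σ₁) * deriv (besselK ν) r₁) =
      (σ₂ * deriv (besselI ν) (r₁ / Real.sqrt σ₂) * besselI ν r₁ -
        besselI ν (r₁ / Real.sqrt σ₂) * deriv (besselI ν) r₁) /
      (σ₂ * deriv (besselI ν) (r₁ / Real.sqrt σ₂) * besselK ν r₁ -
        besselI ν (r₁ / Real.sqrt σ₂) * deriv (besselK ν) r₁)) :
    σ₁ = σ₂ := by
  have hr : 0 < r₁ := hr₁.1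
  have hx₁ : 0 < r₁ / √σ₁ := by positivity
  have hx₂ : 0 < r₁ / √σ₂ := by positivity
  have hcross := mul_eq_mul_of_div_eq_div_of_det_ne_zero hden₁ hden₂
    (by linarith [deriv_besselI_mul_besselK_sub_pos hν hr]) heq
  have hratio : σ₁ * deriv (besselI ν) (r₁ / √σ₁) / besselI ν (r₁ / √σ₁)
      = σ₂ * deriv (besselI ν) (r₁ / √σ₂) / besselI ν (r₁ / √σ₂) := by
    rw [div_eq_div_iff (besselI_pos hν hx₁).ne' (besselI_pos hν hx₂).ne']
    exact hcross
  rw [mul_deriv_besselI_div_eq hν hr hσ₁, mul_deriv_besselI_div_eq hν hr hσ₂] at hratio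
  have hx : r₁ / √σ₁ = r₁ / √σ₂ := (strictAntiOn_besselIRatio_div_pow_three hν).injOn hx₁ hx₂
    (mul_left_cancel₀ (pow_ne_zero 2 hr.ne') hratio)
  rw [div_eq_div_iff (by positivity) (by positivity)] at hx
  exact (sqrt_inj hσ₁.le hσ₂.le).1 (mul_left_cancel₀ hr.ne' hx).symm
end
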